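/- Let k ≥ 3, let x₁, …, x_{k−1} be pairwise distinct nodes of V and X = {x₁, …, x_{k−1}}. If there exist y_s, y_f ∈ V \ X such that the probe (x₁, y_s, x₂, …, x_{k−1}) succeeds and the probe (x₁, y_f, x₂, …, x_{k−1}) fails, then X ∩ C = ∅, and moreover for every y ∈ V \ X we have y ∈ C if and only if the probe (x₁, y, x₂, …, x_{k−1}) fails. -/

import Mathlib

variable {V : Type*}

/-- Under the naive DoS attacker, a probe (an injective `k`-tuple of nodes)
succeeds iff no node of the tuple is compromised, or both the first and last
nodes are compromised. -/
def probeSucceeds {k : ℕ} (hk : 0 < k) (C : Set V) (p : Fin k → V) : Prop :=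
  (∀ i, p i ∉ C) ∨ (p ⟨0, hk⟩ ∈ C ∧ p ⟨k - 1, by omega⟩ ∈ C)

/-- The probe `(x₁, y, x₂, …, x_{k-1})`: the node `y` is inserted in the second
position of the tuple `x₁, …, x_{k-1}`. -/
def probe1 {k : ℕ} (hk : 3 ≤ k) (x : Fin (k - 1) → V) (y : V) : Fin k → V :=
  fun i =>
    if (i : ℕ) = 0 then x ⟨0, by omega⟩
    else if (i : ℕ) = 1 then y
    else x ⟨(i : ℕ) - 1, by have := i.isLt; omega⟩

/-!
All probes `(x₁, y, x₂, …, x_{k-1})` share the endpoints `x₁` and `x_{k-1}`, so if both were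
compromised every such probe would succeed. A failing probe therefore rules this out, and then
a probe succeeds exactly when none of its nodes, i.e. neither `y` nor any node of `X`, is
compromised. The succeeding probe clears `X`, after which the probe of `y` fails iff `y ∈ C`.
-/

section Probe1

variable {k : ℕ} (hk : 3 ≤ k) (x : Fin (k - 1) → V) (y : V)

theorem probe1_zero : probe1 hk x y ⟨0, Nat.zero_lt_of_lt hk⟩ = x ⟨0, by omega⟩ := by
  simp [probe1]

theorem probe1_last : probe1 hk x y ⟨k - 1, by omega⟩ = x ⟨k - 2, by omega⟩ := by
  have h0 : k - 1 ≠ 0 := by omega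
  have h1 : k - 1 ≠ 1 := by omega
  simp only [probe1, h0, h1, if_false]
  congr 1

theorem range_probe1 : Set.range (probe1 hk x y) = insert y (Set.range x) := by
  apply Set.Subset.antisymm
  · rintro _ ⟨i, rfl⟩
    unfold probe1
    split_ifs
    exacts [Or.inr ⟨_, rfl⟩, Or.inl rfl, Or.inr ⟨_, rfl⟩]
  · rintro _ (rfl | ⟨j, rfl⟩)
    · exact ⟨⟨1, by omega⟩, by simp [probe1]⟩
    · by_cases hj : (j : ℕ) = 0
      · exact ⟨⟨0, Nat.zero_lt_of_lt hk⟩, by simp [probe1, ← hj]⟩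
      · refine ⟨⟨j + 1, by omega⟩, ?_⟩
        simp only [probe1, hj, Nat.add_eq_zero_iff, Nat.add_eq_right, one_ne_zero, and_false,
          if_false, Nat.add_sub_cancel]

variable (C : Set V)

theorem probeSucceeds_probe1_of_ends_mem (h₀ : x ⟨0, by omega⟩ ∈ C)
    (hlast : x ⟨k - 2, by omega⟩ ∈ C) : probeSucceeds (Nat.zero_lt_of_lt hk) C (probe1 hk x y) :=
  Or.inr ⟨by rwa [probe1_zero], by rwa [probe1_last]⟩

theorem probeSucceeds_probe1_iff (hends : ¬ (x ⟨0, by omega⟩ ∈ C ∧ x ⟨k - 2, by omega⟩ ∈ C)) :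
    probeSucceeds (Nat.zero_lt_of_lt hk) C (probe1 hk x y) ↔ y ∉ C ∧ Set.range x ∩ C = ∅ := by
  have hright : ¬ (probe1 hk x y ⟨0, Nat.zero_lt_of_lt hk⟩ ∈ C ∧
      probe1 hk x y ⟨k - 1, by omega⟩ ∈ C) := by
    rwa [probe1_zero, probe1_last]
  rw [probeSucceeds, or_iff_left hright, ← Set.forall_mem_range (p := (· ∉ C)),
    range_probe1, Set.forall_mem_insert, ← Set.disjoint_iff_inter_eq_empty,
    Set.disjoint_left]

end Probe1

/-- If among the probes `(x₁, y, x₂, …, x_{k-1})` with `y ∉ X` at least one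
succeeds and at least one fails, then no node of `X` is compromised, and a
node `y ∉ X` is compromised iff its probe fails. -/
theorem stmt1 {k : ℕ} (hk : 3 ≤ k) (C : Set V)
    (x : Fin (k - 1) → V)
    (hs : ∃ ys, ys ∉ Set.range x ∧ probeSucceeds (by omega) C (probe1 hk x ys))
    (hf : ∃ yf, yf ∉ Set.range x ∧ ¬ probeSucceeds (by omega) C (probe1 hk x yf)) :
    Set.range x ∩ C = ∅ ∧
      ∀ y, y ∉ Set.range x → (y ∈ C ↔ ¬ probeSucceeds (by omega) C (probe1 hk x y)) := by
  obtain ⟨ys, -, hsucc⟩ := hs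
  obtain ⟨yf, -, hfail⟩ := hf
  have hends : ¬ (x ⟨0, by omega⟩ ∈ C ∧ x ⟨k - 2, by omega⟩ ∈ C) := fun h =>
    hfail (probeSucceeds_probe1_of_ends_mem hk x yf C h.1 h.2)
  have hX : Set.range x ∩ C = ∅ := ((probeSucceeds_probe1_iff hk x ys C hends).1 hsucc).2
  refine ⟨hX, fun y _ => ?_⟩
  rw [probeSucceeds_probe1_iff hk x y C hends]
  simp [hX]
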